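/- Let V be a finite-dimensional complex vector space equipped with two norms N₀ and N₁, with complex interpolation norms ‖·‖_θ for θ ∈ (0,1). Let F : ℂ → V be continuous on the closed strip 𝕊 and holomorphic on the open strip. Then lim_{s→1⁻} ‖F(s)‖_s = N₁(F(1)). (Lemma 5.8: for an analytic function with values in a fixed finite-dimensional subspace, the interpolation norms of F(s) converge to the endpoint norm of F(1).) -/

import Mathlib

open Complex Set Filter Topology

noncomputable section

/-- The closed strip `𝕊 = {z : 0 ≤ Re z ≤ 1}`. -/
def closedStrip : Set ℂ := {z : ℂ | 0 ≤ z.re ∧ z.re ≤ 1}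

/-- The open strip `{z : 0 < Re z < 1}`. -/
def openStrip : Set ℂ := {z : ℂ | 0 < z.re ∧ z.re < 1}

/-- `N` is a norm on the complex vector space `V`. -/
structure IsNorm (V : Type*) [AddCommGroup V] [Module ℂ V] (N : V → ℝ) : Prop where
  eq_zero_iff : ∀ x : V, N x = 0 ↔ x = 0
  smul : ∀ (a : ℂ) (x : V), N (a • x) = ‖a‖ * N x
  add_le : ∀ x y : V, N (x + y) ≤ N x + N y

/-- The complex interpolation norm at parameter `θ` of the couple of norms `(N₀, N₁)` on `V`. -/
def interpNorm {V : Type*} [NormedAddCommGroup V] [NormedSpace ℂ V]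
    (N₀ N₁ : V → ℝ) (θ : ℝ) (x : V) : ℝ :=
  sInf {M : ℝ | ∃ f : ℂ → V,
    (∃ C : ℝ, ∀ z ∈ closedStrip, ‖f z‖ ≤ C) ∧
    ContinuousOn f closedStrip ∧
    DifferentiableOn ℂ f openStrip ∧
    f (θ : ℂ) = x ∧
    M = max (⨆ t : ℝ, N₀ (f (Complex.I * t))) (⨆ t : ℝ, N₁ (f (1 + Complex.I * t)))}

namespace IsNorm
variable {V : Type*} [AddCommGroup V] [Module ℂ V] {N : V → ℝ}

lemma zero (h : IsNorm V N) : N 0 = 0 := (h.eq_zero_iff 0).2 rfl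

lemma neg (h : IsNorm V N) (x : V) : N (-x) = N x := by
  have := h.smul (-1) x
  simpa using this

lemma nonneg (h : IsNorm V N) (x : V) : 0 ≤ N x := by
  have h2 : N 0 ≤ N x + N (-x) := h.add_le x (-x) |>.trans_eq' (by rw [add_neg_cancel])
  rw [h.zero, h.neg] at h2
  linarith

lemma sub_le (h : IsNorm V N) (x y : V) : N x - N y ≤ N (x - y) := by
  have := h.add_le (x - y) y
  simp only [sub_add_cancel] at this
  linarith

end IsNorm

/-- Norming functional for an abstract norm on a finite-dimensional complex space. -/
lemma exists_norming {V : Type*} [AddCommGroup V] [Module ℂ V] [Module.Finite ℂ V]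
    (N : V → ℝ) (hN : IsNorm V N) (x : V) :
    ∃ φ : V →ₗ[ℂ] ℂ, φ x = (N x : ℂ) ∧ ∀ v, ‖φ v‖ ≤ N v := by
  letI : NormedAddCommGroup V := AddGroupNorm.toNormedAddCommGroup
    { toFun := N
      map_zero' := hN.zero
      add_le' := hN.add_le
      neg' := hN.neg
      eq_zero_of_map_eq_zero' := fun v hv => (hN.eq_zero_iff v).1 hv }
  have hnorm : ∀ v : V, ‖v‖ = N v := fun v => rfl
  letI : NormedSpace ℂ V :=
    { norm_smul_le := fun a v => by rw [hnorm, hnorm, hN.smul] }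
  by_cases hx : x = 0
  · exact ⟨0, by simp [hx, hN.zero], fun v => by simpa using hN.nonneg v⟩
  · obtain ⟨g, hg1, hgx⟩ := exists_dual_vector ℂ x (norm_ne_zero_iff.mpr hx)
    refine ⟨g.toLinearMap, by simpa [hnorm] using hgx, fun v => ?_⟩
    calc ‖g v‖ ≤ ‖g‖ * ‖v‖ := g.le_opNorm v
    _ = N v := by rw [hg1, one_mul, hnorm]


lemma exists_comparison {V : Type*} [NormedAddCommGroup V] [NormedSpace ℂ V]
    [FiniteDimensional ℂ V] (N : V → ℝ) (hN : IsNorm V N) :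
    ∃ C : ℝ, 0 < C ∧ (∀ v, N v ≤ C * ‖v‖) ∧ (∀ v, ‖v‖ ≤ C * N v) := by
  -- upper bound
  obtain ⟨A, hA0, hA⟩ : ∃ A : ℝ, 0 ≤ A ∧ ∀ v : V, N v ≤ A * ‖v‖ := by
    set b := Module.finBasis ℂ V
    set c : Fin (Module.finrank ℂ V) → ℝ :=
      fun i => ‖LinearMap.toContinuousLinearMap (b.coord i)‖ * N (b i)
    refine ⟨∑ i, c i, Finset.sum_nonneg fun i _ =>
      mul_nonneg (norm_nonneg _) (hN.nonneg _), fun v => ?_⟩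
    have h1 : N v = N (∑ i, b.repr v i • b i) := by rw [b.sum_repr v]
    rw [h1, Finset.sum_mul]
    refine (Finset.le_sum_of_subadditive N hN.zero.le hN.add_le _ _).trans
      (Finset.sum_le_sum fun i _ => ?_)
    rw [hN.smul]
    have h2 : ‖b.repr v i‖ ≤ ‖LinearMap.toContinuousLinearMap (b.coord i)‖ * ‖v‖ := by
      have := (LinearMap.toContinuousLinearMap (b.coord i)).le_opNorm v
      simpa [Module.Basis.coord_apply] using this
    calc ‖b.repr v i‖ * N (b i)
        ≤ (‖LinearMap.toContinuousLinearMap (b.coord i)‖ * ‖v‖) * N (b i) :=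
          mul_le_mul_of_nonneg_right h2 (hN.nonneg _)
      _ = c i * ‖v‖ := by ring
  -- lower bound
  obtain ⟨B, hB0, hB⟩ : ∃ B : ℝ, 0 ≤ B ∧ ∀ v : V, ‖v‖ ≤ B * N v := by
    rcases subsingleton_or_nontrivial V with hV | hV
    · exact ⟨0, le_refl _, fun v => by
        rw [Subsingleton.elim v 0]; simp [hN.zero]⟩
    · have hcont : Continuous N := by
        rw [Metric.continuous_iff]
        intro u ε hε
        rcases eq_or_lt_of_le hA0 with hA' | hA'
        · refine ⟨1, one_pos, fun w _ => ?_⟩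
          have h1 := hA w; have h2 := hA u
          rw [← hA'] at h1 h2
          have e1 : N w = 0 := le_antisymm (by linarith) (hN.nonneg w)
          have e2 : N u = 0 := le_antisymm (by linarith) (hN.nonneg u)
          rw [Real.dist_eq, e1, e2, sub_zero, abs_zero]
          exact hε
        · refine ⟨ε / A, div_pos hε hA', fun w hw => ?_⟩
          rw [Real.dist_eq]
          have h1 : N w - N u ≤ N (w - u) := by
            have := hN.add_le (w - u) u; simp only [sub_add_cancel] at this; linarith
          have h2 : N u - N w ≤ N (u - w) := by
            have := hN.add_le (u - w) w; simp only [sub_add_cancel] at this; linarith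
          have h3 : N (w - u) ≤ A * ‖w - u‖ := hA _
          have h4 : N (u - w) ≤ A * ‖u - w‖ := hA _
          rw [norm_sub_rev] at h4
          have h5 : ‖w - u‖ < ε / A := by rwa [dist_eq_norm] at hw
          have h6 : A * ‖w - u‖ < ε := by
            calc A * ‖w - u‖ < A * (ε / A) := by
                  exact mul_lt_mul_of_pos_left h5 hA'
              _ = ε := by field_simp
          rw [abs_sub_lt_iff]; constructor <;> linarith
      obtain ⟨v₀, hv₀s, hv₀min⟩ := (isCompact_sphere (0 : V) 1).exists_isMinOn
        (NormedSpace.sphere_nonempty.mpr zero_le_one) hcont.continuousOn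
      have hv₀1 : ‖v₀‖ = 1 := by simpa using hv₀s
      have hv₀ne : v₀ ≠ 0 := by intro h; rw [h] at hv₀1; simp at hv₀1
      have hm : 0 < N v₀ :=
        lt_of_le_of_ne (hN.nonneg _) (fun h => hv₀ne ((hN.eq_zero_iff v₀).1 h.symm))
      refine ⟨(N v₀)⁻¹, le_of_lt (inv_pos.mpr hm), fun v => ?_⟩
      rcases eq_or_ne v 0 with rfl | hv
      · simp [hN.zero]
      · have hvn : (0:ℝ) < ‖v‖ := norm_pos_iff.mpr hv
        set u : V := (‖v‖⁻¹ : ℂ) • v with hu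
        have hus : u ∈ Metric.sphere (0 : V) 1 := by
          simp [hu, norm_smul, inv_mul_cancel₀ (ne_of_gt hvn)]
        have h1 : N v₀ ≤ N u := hv₀min hus
        have h2 : N u = ‖v‖⁻¹ * N v := by
          rw [hu, hN.smul]; norm_num
        rw [h2] at h1
        rw [le_inv_mul_iff₀ hm]
        calc N v₀ * ‖v‖ ≤ (‖v‖⁻¹ * N v) * ‖v‖ := mul_le_mul_of_nonneg_right h1 hvn.le
          _ = N v := by field_simp
  refine ⟨max A B + 1, by positivity, fun v => ?_, fun v => ?_⟩
  · exact (hA v).trans (mul_le_mul_of_nonneg_right (by linarith [le_max_left A B]) (norm_nonneg _))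
  · exact (hB v).trans (mul_le_mul_of_nonneg_right (by linarith [le_max_right A B]) (hN.nonneg _))


section InterpAux

variable {V : Type*} [NormedAddCommGroup V] [NormedSpace ℂ V]

/-- The admissible-value set defining `interpNorm`. -/
def interpSet (N₀ N₁ : V → ℝ) (θ : ℝ) (x : V) : Set ℝ :=
  {M : ℝ | ∃ f : ℂ → V,
    (∃ C : ℝ, ∀ z ∈ closedStrip, ‖f z‖ ≤ C) ∧
    ContinuousOn f closedStrip ∧
    DifferentiableOn ℂ f openStrip ∧
    f (θ : ℂ) = x ∧
    M = max (⨆ t : ℝ, N₀ (f (Complex.I * t))) (⨆ t : ℝ, N₁ (f (1 + Complex.I * t)))}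

lemma interpNorm_eq (N₀ N₁ : V → ℝ) (θ : ℝ) (x : V) :
    interpNorm N₀ N₁ θ x = sInf (interpSet N₀ N₁ θ x) := rfl

lemma I_mul_mem (t : ℝ) : Complex.I * t ∈ closedStrip := by
  simp [closedStrip]

lemma one_add_I_mul_mem (t : ℝ) : 1 + Complex.I * t ∈ closedStrip := by
  simp [closedStrip]

lemma bddAbove_left {N : V → ℝ} {C D : ℝ} (hC : ∀ v, N v ≤ C * ‖v‖)
    {f : ℂ → V} (hf : ∀ z ∈ closedStrip, ‖f z‖ ≤ D) (hC0 : 0 ≤ C) :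
    BddAbove (Set.range fun t : ℝ => N (f (Complex.I * t))) := by
  refine ⟨C * D, fun y hy => ?_⟩
  obtain ⟨t, rfl⟩ := hy
  exact (hC _).trans (mul_le_mul_of_nonneg_left (hf _ (I_mul_mem t)) hC0)

lemma bddAbove_right {N : V → ℝ} {C D : ℝ} (hC : ∀ v, N v ≤ C * ‖v‖)
    {f : ℂ → V} (hf : ∀ z ∈ closedStrip, ‖f z‖ ≤ D) (hC0 : 0 ≤ C) :
    BddAbove (Set.range fun t : ℝ => N (f (1 + Complex.I * t))) := by
  refine ⟨C * D, fun y hy => ?_⟩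
  obtain ⟨t, rfl⟩ := hy
  exact (hC _).trans (mul_le_mul_of_nonneg_left (hf _ (one_add_I_mul_mem t)) hC0)

lemma interpSet_nonneg {N₀ N₁ : V → ℝ} (h₀ : IsNorm V N₀) (h₁ : IsNorm V N₁)
    {θ : ℝ} {x : V} {M : ℝ} (hM : M ∈ interpSet N₀ N₁ θ x) : 0 ≤ M := by
  obtain ⟨f, _, _, _, _, rfl⟩ := hM
  exact le_trans (Real.iSup_nonneg fun t => h₀.nonneg _) (le_max_left _ _)

lemma interpSet_bddBelow {N₀ N₁ : V → ℝ} (h₀ : IsNorm V N₀) (h₁ : IsNorm V N₁)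
    (θ : ℝ) (x : V) : BddBelow (interpSet N₀ N₁ θ x) :=
  ⟨0, fun _ hM => interpSet_nonneg h₀ h₁ hM⟩

/-- The exponential competitor. -/
lemma exp_mem_interpSet {N₀ N₁ : V → ℝ} (h₀ : IsNorm V N₀) (h₁ : IsNorm V N₁)
    (θ : ℝ) (x : V) (l : ℝ) :
    max (Real.exp (-(l*θ)) * N₀ x) (Real.exp (l*(1-θ)) * N₁ x) ∈ interpSet N₀ N₁ θ x := by
  set f : ℂ → V := fun z => Complex.exp (l*(z-θ)) • x with hf
  have hre : ∀ z : ℂ, ‖Complex.exp (l*(z-θ))‖ = Real.exp (l*(z.re-θ)) := by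
    intro z
    rw [Complex.norm_exp]
    congr 1
    simp [Complex.mul_re]
  have hnf : ∀ z : ℂ, ‖f z‖ = Real.exp (l*(z.re-θ)) * ‖x‖ := fun z => by
    rw [hf]; simp only [norm_smul, hre]
  refine ⟨f, ⟨Real.exp (|l| * (1 + |θ|)) * ‖x‖, fun z hz => ?_⟩, ?_, ?_, ?_, ?_⟩
  · rw [hnf]
    refine mul_le_mul_of_nonneg_right (Real.exp_le_exp.2 ?_) (norm_nonneg x)
    obtain ⟨hz0, hz1⟩ := hz
    calc l*(z.re-θ) ≤ |l*(z.re-θ)| := le_abs_self _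
      _ = |l| * |z.re-θ| := abs_mul _ _
      _ ≤ |l| * (1 + |θ|) := by
          refine mul_le_mul_of_nonneg_left ?_ (abs_nonneg l)
          calc |z.re - θ| ≤ |z.re| + |θ| := abs_sub _ _
            _ ≤ 1 + |θ| := by
                have : |z.re| ≤ 1 := abs_le.2 ⟨by linarith, hz1⟩
                linarith
  · exact ((Complex.continuous_exp.comp (by continuity)).smul continuous_const).continuousOn
  · refine DifferentiableOn.smul_const ?_ x
    exact ((Complex.differentiable_exp.comp
      (((differentiable_id).sub_const _).const_mul _))).differentiableOn
  · rw [hf]; simp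
  · have e0 : (fun t : ℝ => N₀ (f (Complex.I * t))) = fun _ : ℝ => Real.exp (-(l*θ)) * N₀ x := by
      funext t
      rw [hf]
      simp only [h₀.smul, hre]
      congr 2
      simp [Complex.mul_re]
    have e1 : (fun t : ℝ => N₁ (f (1 + Complex.I * t)))
        = fun _ : ℝ => Real.exp (l*(1-θ)) * N₁ x := by
      funext t
      rw [hf]
      simp only [h₁.smul, hre]
      congr 2
      simp [Complex.mul_re]
    rw [e0, e1, ciSup_const, ciSup_const]

lemma interpNorm_nonneg {N₀ N₁ : V → ℝ} (h₀ : IsNorm V N₀) (h₁ : IsNorm V N₁)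
    (θ : ℝ) (x : V) : 0 ≤ interpNorm N₀ N₁ θ x :=
  le_csInf ⟨_, exp_mem_interpSet h₀ h₁ θ x 0⟩ fun _ hM => interpSet_nonneg h₀ h₁ hM

lemma interpNorm_le_exp {N₀ N₁ : V → ℝ} (h₀ : IsNorm V N₀) (h₁ : IsNorm V N₁)
    (θ : ℝ) (x : V) (l : ℝ) :
    interpNorm N₀ N₁ θ x ≤ max (Real.exp (-(l*θ)) * N₀ x) (Real.exp (l*(1-θ)) * N₁ x) :=
  csInf_le (interpSet_bddBelow h₀ h₁ θ x) (exp_mem_interpSet h₀ h₁ θ x l)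

lemma interpNorm_le_max {N₀ N₁ : V → ℝ} (h₀ : IsNorm V N₀) (h₁ : IsNorm V N₁)
    (θ : ℝ) (x : V) : interpNorm N₀ N₁ θ x ≤ max (N₀ x) (N₁ x) := by
  simpa using interpNorm_le_exp h₀ h₁ θ x 0

/-- Triangle inequality for the interpolation norm.  Needs comparison constants for the
`BddAbove` side conditions. -/
lemma interpNorm_add_le {N₀ N₁ : V → ℝ} (h₀ : IsNorm V N₀) (h₁ : IsNorm V N₁)
    {C : ℝ} (hC0 : 0 < C) (hC : ∀ v, N₀ v ≤ C * ‖v‖) (hC' : ∀ v, N₁ v ≤ C * ‖v‖)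
    (θ : ℝ) (x y : V) :
    interpNorm N₀ N₁ θ (x + y) ≤ interpNorm N₀ N₁ θ x + interpNorm N₀ N₁ θ y := by
  rw [interpNorm_eq, interpNorm_eq, interpNorm_eq]
  have key : ∀ Mx ∈ interpSet N₀ N₁ θ x, ∀ My ∈ interpSet N₀ N₁ θ y,
      sInf (interpSet N₀ N₁ θ (x + y)) ≤ Mx + My := by
    intro Mx hMx My hMy
    obtain ⟨f, ⟨Df, hDf⟩, hfc, hfd, hfx, rfl⟩ := hMx
    obtain ⟨g, ⟨Dg, hDg⟩, hgc, hgd, hgy, rfl⟩ := hMy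
    have mem : (max (⨆ t : ℝ, N₀ ((f + g) (Complex.I * t)))
        (⨆ t : ℝ, N₁ ((f + g) (1 + Complex.I * t)))) ∈ interpSet N₀ N₁ θ (x + y) := by
      refine ⟨f + g, ⟨Df + Dg, fun z hz => ?_⟩, hfc.add hgc, hfd.add hgd, by
        simp [hfx, hgy], rfl⟩
      exact (norm_add_le _ _).trans (add_le_add (hDf z hz) (hDg z hz))
    refine (csInf_le (interpSet_bddBelow h₀ h₁ θ (x+y)) mem).trans ?_
    have hsum0 : (⨆ t : ℝ, N₀ ((f + g) (Complex.I * t)))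
        ≤ (⨆ t : ℝ, N₀ (f (Complex.I * t))) + (⨆ t : ℝ, N₀ (g (Complex.I * t))) := by
      refine ciSup_le fun t => ?_
      refine (h₀.add_le _ _).trans (add_le_add ?_ ?_)
      · exact le_ciSup (bddAbove_left hC hDf hC0.le) t
      · exact le_ciSup (bddAbove_left hC hDg hC0.le) t
    have hsum1 : (⨆ t : ℝ, N₁ ((f + g) (1 + Complex.I * t)))
        ≤ (⨆ t : ℝ, N₁ (f (1 + Complex.I * t))) + (⨆ t : ℝ, N₁ (g (1 + Complex.I * t))) := by
      refine ciSup_le fun t => ?_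
      refine (h₁.add_le _ _).trans (add_le_add ?_ ?_)
      · exact le_ciSup (bddAbove_right hC' hDf hC0.le) t
      · exact le_ciSup (bddAbove_right hC' hDg hC0.le) t
    refine max_le ?_ ?_
    · exact hsum0.trans (add_le_add (le_max_left _ _) (le_max_left _ _))
    · exact hsum1.trans (add_le_add (le_max_right _ _) (le_max_right _ _))
  have h1 : sInf (interpSet N₀ N₁ θ (x + y)) - sInf (interpSet N₀ N₁ θ y)
      ≤ sInf (interpSet N₀ N₁ θ x) := by
    refine le_csInf ⟨_, exp_mem_interpSet h₀ h₁ θ x 0⟩ fun Mx hMx => ?_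
    rw [sub_le_iff_le_add]
    have h2 : sInf (interpSet N₀ N₁ θ (x + y)) - Mx ≤ sInf (interpSet N₀ N₁ θ y) := by
      refine le_csInf ⟨_, exp_mem_interpSet h₀ h₁ θ y 0⟩ fun My hMy => ?_
      rw [sub_le_iff_le_add']
      exact key Mx hMx My hMy
    linarith
  linarith

end InterpAux


section Lower

open Complex.HadamardThreeLines in
lemma norm_one_le_of_mem_interpSet {V : Type*} [NormedAddCommGroup V] [NormedSpace ℂ V]
    [FiniteDimensional ℂ V] {N₀ N₁ : V → ℝ} (h₀ : IsNorm V N₀) (h₁ : IsNorm V N₁)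
    {C : ℝ} (hC0 : 0 < C) (hC : ∀ v, N₀ v ≤ C * ‖v‖)
    {K : ℝ} (hK1 : 1 ≤ K) (hK : ∀ v, N₁ v ≤ K * N₀ v)
    {θ : ℝ} (hθ : θ ∈ Set.Ioo (0:ℝ) 1) (x : V) {M : ℝ} (hM : M ∈ interpSet N₀ N₁ θ x) :
    N₁ x ≤ K ^ (1-θ) * M := by
  have hK0 : (0:ℝ) ≤ K := le_trans zero_le_one hK1
  have hM0 : 0 ≤ M := interpSet_nonneg h₀ h₁ hM
  obtain ⟨f, ⟨Df, hDf⟩, hfc, hfd, hfx, rfl⟩ := hM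
  set M := max (⨆ t : ℝ, N₀ (f (Complex.I * t))) (⨆ t : ℝ, N₁ (f (1 + Complex.I * t))) with hMdef
  obtain ⟨φ, hφx, hφ⟩ := exists_norming N₁ h₁ x
  set φL : V →L[ℂ] ℂ := LinearMap.toContinuousLinearMap φ with hφL
  set g : ℂ → ℂ := fun z => φL (f z) with hg
  have hsets : verticalStrip 0 1 = openStrip := by
    ext z; simp [verticalStrip, openStrip, Set.mem_Ioo]
  have hsetc : verticalClosedStrip 0 1 = closedStrip := by
    ext z; simp [verticalClosedStrip, closedStrip, Set.mem_Icc]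
  have hclosed : IsClosed (verticalClosedStrip 0 1) := isClosed_Icc.preimage Complex.continuous_re
  have hsub : verticalStrip 0 1 ⊆ verticalClosedStrip 0 1 := fun z hz => by
    rw [hsets] at hz; rw [hsetc]; exact ⟨hz.1.le, hz.2.le⟩
  have hd : DiffContOnCl ℂ g (verticalStrip 0 1) := by
    constructor
    · rw [hsets]
      exact φL.differentiable.comp_differentiableOn hfd
    · refine ContinuousOn.mono ?_ (closure_minimal hsub hclosed)
      rw [hsetc]
      exact φL.continuous.comp_continuousOn hfc
  have hB : BddAbove ((norm ∘ g) '' verticalClosedStrip 0 1) := by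
    refine ⟨‖φL‖ * Df, fun y hy => ?_⟩
    obtain ⟨z, hz, rfl⟩ := hy
    rw [hsetc] at hz
    exact (φL.le_opNorm _).trans (mul_le_mul_of_nonneg_left (hDf z hz) (norm_nonneg _))
  have ha : ∀ z ∈ Complex.re ⁻¹' {0}, ‖g z‖ ≤ K * M := by
    intro z hz
    have hz0 : z.re = 0 := hz
    have hzI : z = Complex.I * z.im := by
      apply Complex.ext <;> simp [hz0]
    calc ‖g z‖ = ‖φ (f z)‖ := rfl
      _ ≤ N₁ (f z) := hφ _
      _ ≤ K * N₀ (f z) := hK _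
      _ ≤ K * M := by
          refine mul_le_mul_of_nonneg_left ?_ hK0
          rw [hzI]
          exact (le_ciSup (bddAbove_left hC hDf hC0.le) z.im).trans (le_max_left _ _)
  have hb : ∀ z ∈ Complex.re ⁻¹' {1}, ‖g z‖ ≤ M := by
    intro z hz
    have hz1 : z.re = 1 := hz
    have hzI : z = 1 + Complex.I * z.im := by
      apply Complex.ext <;> simp [hz1]
    calc ‖g z‖ = ‖φ (f z)‖ := rfl
      _ ≤ N₁ (f z) := hφ _
      _ ≤ M := by
          rw [hzI]
          exact (le_ciSup (bddAbove_right (fun v => hK v |>.trans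
            (mul_le_mul_of_nonneg_left (hC v) hK0) |>.trans_eq (mul_assoc _ _ _).symm)
            hDf (by positivity)) z.im).trans (le_max_right _ _)
  have hzmem : (θ:ℂ) ∈ verticalClosedStrip 0 1 := by
    rw [hsetc]; exact ⟨by simpa using hθ.1.le, by simpa using hθ.2.le⟩
  have key := norm_le_interp_of_mem_verticalClosedStrip' zero_lt_one hzmem hd hB ha hb
  rw [Complex.ofReal_re, sub_zero, sub_zero, div_one] at key
  have hgθ : ‖g (θ:ℂ)‖ = N₁ x := by
    rw [hg]
    show ‖φ (f (θ:ℂ))‖ = N₁ x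
    rw [hfx, hφx, Complex.norm_real, Real.norm_of_nonneg (h₁.nonneg x)]
  rw [hgθ] at key
  refine key.trans (le_of_eq ?_)
  rcases eq_or_lt_of_le hM0 with hM' | hM'
  · rw [← hM', mul_zero, Real.zero_rpow (ne_of_gt hθ.1), mul_zero, mul_zero]
  · rw [Real.mul_rpow hK0 hM0, mul_assoc, ← Real.rpow_add hM', sub_add_cancel, Real.rpow_one]

lemma div_le_interpNorm {V : Type*} [NormedAddCommGroup V] [NormedSpace ℂ V]
    [FiniteDimensional ℂ V] {N₀ N₁ : V → ℝ} (h₀ : IsNorm V N₀) (h₁ : IsNorm V N₁)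
    {C : ℝ} (hC0 : 0 < C) (hC : ∀ v, N₀ v ≤ C * ‖v‖)
    {K : ℝ} (hK1 : 1 ≤ K) (hK : ∀ v, N₁ v ≤ K * N₀ v)
    {θ : ℝ} (hθ : θ ∈ Set.Ioo (0:ℝ) 1) (x : V) :
    N₁ x / K ^ (1-θ) ≤ interpNorm N₀ N₁ θ x := by
  have hKpos : (0:ℝ) < K ^ (1-θ) := Real.rpow_pos_of_pos (lt_of_lt_of_le one_pos hK1) _
  rw [interpNorm_eq]
  refine le_csInf ⟨_, exp_mem_interpSet h₀ h₁ θ x 0⟩ fun M hM => ?_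
  rw [div_le_iff₀ hKpos, mul_comm]
  exact norm_one_le_of_mem_interpSet h₀ h₁ hC0 hC hK1 hK hθ x hM

end Lower

set_option maxHeartbeats 1000000 in
/-- Lemma 5.8: let `V` be a finite-dimensional complex vector space with two norms `N₀, N₁`, and
let `F : ℂ → V` be continuous on the closed strip and holomorphic on the open strip.  Then
`lim_{s→1⁻} ‖F s‖_s = N₁ (F 1)`. -/
theorem tendsto_interpNorm_of_analytic
    {V : Type*} [NormedAddCommGroup V] [NormedSpace ℂ V] [FiniteDimensional ℂ V]
    (N₀ N₁ : V → ℝ) (h₀ : IsNorm V N₀) (h₁ : IsNorm V N₁)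
    (F : ℂ → V) (hFc : ContinuousOn F closedStrip)
    (hFd : DifferentiableOn ℂ F openStrip) :
    Tendsto (fun s : ℝ => interpNorm N₀ N₁ s (F (s : ℂ))) (𝓝[<] (1 : ℝ)) (𝓝 (N₁ (F 1))) := by
  set x := F 1 with hx
  obtain ⟨C₀, hC₀0, hC₀u, hC₀l⟩ := exists_comparison N₀ h₀
  obtain ⟨C₁, hC₁0, hC₁u, hC₁l⟩ := exists_comparison N₁ h₁
  set C := max C₀ C₁ with hCdef
  have hCpos : 0 < C := lt_max_of_lt_left hC₀0
  have hCu0 : ∀ v, N₀ v ≤ C * ‖v‖ := fun v =>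
    (hC₀u v).trans (mul_le_mul_of_nonneg_right (le_max_left _ _) (norm_nonneg _))
  have hCu1 : ∀ v, N₁ v ≤ C * ‖v‖ := fun v =>
    (hC₁u v).trans (mul_le_mul_of_nonneg_right (le_max_right _ _) (norm_nonneg _))
  set K := max (C * C₀) 1 with hKdef
  have hK1 : (1:ℝ) ≤ K := le_max_right _ _
  have hKpos : (0:ℝ) < K := lt_of_lt_of_le one_pos hK1
  have hK : ∀ v, N₁ v ≤ K * N₀ v := by
    intro v
    calc N₁ v ≤ C * ‖v‖ := hCu1 v
      _ ≤ C * (C₀ * N₀ v) := mul_le_mul_of_nonneg_left (hC₀l v) hCpos.le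
      _ = (C * C₀) * N₀ v := by ring
      _ ≤ K * N₀ v := mul_le_mul_of_nonneg_right (le_max_left _ _) (h₀.nonneg v)
  -- convergence of F along the approach
  have hmap : Tendsto (fun s : ℝ => (s:ℂ)) (𝓝[<] (1:ℝ)) (𝓝[closedStrip] 1) := by
    rw [tendsto_nhdsWithin_iff]
    constructor
    · exact (Complex.continuous_ofReal.tendsto 1).mono_left nhdsWithin_le_nhds
    · filter_upwards [Ioo_mem_nhdsLT_of_mem (⟨zero_lt_one, le_refl 1⟩ : (1:ℝ) ∈ Set.Ioc 0 1)]
        with s hs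
      exact ⟨by simpa using hs.1.le, by simpa using hs.2.le⟩
  have hF1 : Tendsto (fun s : ℝ => F (s:ℂ)) (𝓝[<] (1:ℝ)) (𝓝 x) :=
    (hFc 1 (by simp [closedStrip])).tendsto.comp hmap
  have hFlim : Tendsto (fun s : ℝ => ‖F (s:ℂ) - x‖) (𝓝[<] (1:ℝ)) (𝓝 0) := by
    have := (hF1.sub_const x).norm
    simpa using this
  have hCFlim : Tendsto (fun s : ℝ => C * ‖F (s:ℂ) - x‖) (𝓝[<] (1:ℝ)) (𝓝 0) := by
    simpa using hFlim.const_mul C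
  -- convergence of the rpow correction factor
  have hKt : Tendsto (fun s : ℝ => N₁ x / K ^ (1-s)) (𝓝[<] (1:ℝ)) (𝓝 (N₁ x)) := by
    have hfun : (fun s : ℝ => N₁ x / K ^ (1-s))
        = fun s : ℝ => N₁ x / Real.exp (Real.log K * (1-s)) := by
      funext s; rw [Real.rpow_def_of_pos hKpos]
    have hcont : Continuous fun s : ℝ => N₁ x / Real.exp (Real.log K * (1-s)) := by
      refine continuous_const.div (by continuity) fun s => (Real.exp_pos _).ne'
    have := (hcont.tendsto 1).mono_left (nhdsWithin_le_nhds (s := Set.Iio (1:ℝ)))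
    rw [hfun]
    simpa using this
  rw [Metric.tendsto_nhds]
  intro ε hε
  -- choose the exponential rate
  obtain ⟨l, hl0, hl⟩ : ∃ l : ℝ, 0 ≤ l ∧ Real.exp (-(l/2)) * N₀ x < N₁ x + ε/4 := by
    have hpos : 0 < N₁ x + ε/4 := by have := h₁.nonneg x; linarith
    have ht : Tendsto (fun l : ℝ => Real.exp (-(l/2)) * N₀ x) atTop (𝓝 0) := by
      have h1 : Tendsto (fun l : ℝ => -(l/2)) atTop atBot := by
        apply tendsto_neg_atBot_iff.mpr
        exact tendsto_id.atTop_div_const two_pos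
      simpa using (Real.tendsto_exp_atBot.comp h1).mul_const (N₀ x)
    have := (ht.eventually_lt_const hpos).and (eventually_ge_atTop (0:ℝ))
    obtain ⟨l, hl⟩ := this.exists
    exact ⟨l, hl.2, hl.1⟩
  -- eventual bounds
  have hev1 : ∀ᶠ s in 𝓝[<] (1:ℝ), s ∈ Set.Ioo (1/2 : ℝ) 1 :=
    Ioo_mem_nhdsLT_of_mem ⟨by norm_num, le_refl 1⟩
  have hev2 : ∀ᶠ s in 𝓝[<] (1:ℝ), Real.exp (l*(1-s)) * N₁ x < N₁ x + ε/4 := by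
    have hcont : Continuous fun s : ℝ => Real.exp (l*(1-s)) * N₁ x := by continuity
    have ht := (hcont.tendsto 1).mono_left (nhdsWithin_le_nhds (s := Set.Iio (1:ℝ)))
    simp only [sub_self, mul_zero, Real.exp_zero, one_mul] at ht
    exact ht.eventually_lt_const (by linarith)
  have hev3 : ∀ᶠ s : ℝ in 𝓝[<] (1:ℝ), C * ‖F (s:ℂ) - x‖ < ε/4 :=
    hCFlim.eventually_lt_const (by linarith)
  have hev4 : ∀ᶠ s in 𝓝[<] (1:ℝ), N₁ x - ε/2 < N₁ x / K ^ (1-s) :=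
    hKt.eventually_const_lt (by linarith)
  filter_upwards [hev1, hev2, hev3, hev4] with s hs1 hs2 hs3 hs4
  have hsIoo : s ∈ Set.Ioo (0:ℝ) 1 := ⟨by linarith [hs1.1], hs1.2⟩
  -- upper bound
  have hup : interpNorm N₀ N₁ s (F (s:ℂ)) < N₁ x + ε/2 := by
    have e1 : x + (F (s:ℂ) - x) = F (s:ℂ) := by abel
    have t1 : interpNorm N₀ N₁ s (F (s:ℂ))
        ≤ interpNorm N₀ N₁ s x + interpNorm N₀ N₁ s (F (s:ℂ) - x) := by
      have := interpNorm_add_le h₀ h₁ hCpos hCu0 hCu1 s x (F (s:ℂ) - x)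
      rwa [e1] at this
    have t2 : interpNorm N₀ N₁ s x
        ≤ max (Real.exp (-(l*s)) * N₀ x) (Real.exp (l*(1-s)) * N₁ x) :=
      interpNorm_le_exp h₀ h₁ s x l
    have t3 : Real.exp (-(l*s)) * N₀ x ≤ Real.exp (-(l/2)) * N₀ x := by
      refine mul_le_mul_of_nonneg_right (Real.exp_le_exp.2 ?_) (h₀.nonneg x)
      nlinarith [hs1.1, hs1.2, hl0]
    have t4 : interpNorm N₀ N₁ s (F (s:ℂ) - x) ≤ C * ‖F (s:ℂ) - x‖ :=
      (interpNorm_le_max h₀ h₁ s _).trans (max_le (hCu0 _) (hCu1 _))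
    have t5 : max (Real.exp (-(l*s)) * N₀ x) (Real.exp (l*(1-s)) * N₁ x) < N₁ x + ε/4 :=
      max_lt (lt_of_le_of_lt t3 hl) hs2
    linarith
  -- lower bound
  have hlow : N₁ x - ε < interpNorm N₀ N₁ s (F (s:ℂ)) := by
    have e2 : F (s:ℂ) + (x - F (s:ℂ)) = x := by abel
    have t1 : interpNorm N₀ N₁ s x
        ≤ interpNorm N₀ N₁ s (F (s:ℂ)) + interpNorm N₀ N₁ s (x - F (s:ℂ)) := by
      have := interpNorm_add_le h₀ h₁ hCpos hCu0 hCu1 s (F (s:ℂ)) (x - F (s:ℂ))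
      rwa [e2] at this
    have t2 : N₁ x / K ^ (1-s) ≤ interpNorm N₀ N₁ s x :=
      div_le_interpNorm h₀ h₁ hCpos hCu0 hK1 hK hsIoo x
    have t3 : interpNorm N₀ N₁ s (x - F (s:ℂ)) ≤ C * ‖F (s:ℂ) - x‖ := by
      refine (interpNorm_le_max h₀ h₁ s _).trans ((max_le (hCu0 _) (hCu1 _)).trans ?_)
      rw [norm_sub_rev]
    linarith
  rw [Real.dist_eq, abs_sub_lt_iff]
  constructor <;> linarith
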